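/- Let A, B ∈ M_m(ℂ) be traceless Hermitian matrices, Δ = A − B, P₊ the projector onto the strictly positive eigenspace of Δ, P₀ the projector onto the kernel of Δ, and E₀ Hermitian with 0 ≤ E₀ ≤ P₀. Assume Tr((P₊ + E₀) A) ≥ Tr((P₊ + E₀) B) ≥ 0. Then the map λ_cg(X) = Tr((P₊ + E₀) X) |0⟩⟨0| + Tr((I − P₊ − E₀) X) |1⟩⟨1| satisfies ‖λ_cg(A)‖₁ − ‖λ_cg(B)‖₁ = ‖λ_cg(A − B)‖₁ = ‖A − B‖₁. -/

import Mathlib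

/-!
Write `F = P₊ + E₀`. Since `0 ≤ E₀ ≤ P₀` and `P₀` kills both `Δ₊` and `Δ₋`, so does `E₀`; hence
`F (A − B) = Δ₊`. For traceless `X` we have `λ_cg(X) = Tr(F X) (|0⟩⟨0| − |1⟩⟨1|)`, whose trace norm
is `2 |Tr(F X)|`, and `0 ≤ Tr(F B) ≤ Tr(F A)` turns the first identity into
`Tr(F A) − Tr(F B) = Tr(F (A − B))`. Finally `‖Δ‖₁ = Tr(Δ₊ + Δ₋) = 2 Tr Δ₊ = 2 Tr(F Δ)`, because
`Tr Δ = 0`.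
-/

open scoped ComplexOrder

/-- The trace norm (Schatten 1-norm) of a complex matrix: `‖A‖₁ = Tr √(Aᴴ A)`. -/
noncomputable def traceNorm {m : Type*} [Fintype m] [DecidableEq m]
    (A : Matrix m m ℂ) : ℝ :=
  ((((Matrix.posSemidef_conjTranspose_mul_self A).1.eigenvectorUnitary : Matrix m m ℂ) *
      Matrix.diagonal (fun i => ((√((Matrix.posSemidef_conjTranspose_mul_self A).1.eigenvalues i)
        : ℝ) : ℂ)) *
      (star (Matrix.posSemidef_conjTranspose_mul_self A).1.eigenvectorUnitary :
        Matrix m m ℂ)).trace).re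

/-- `P` is the orthogonal projector onto the support (range) of the Hermitian matrix `Q`. -/
def IsSupportProjection {d : Type*} [Fintype d]
    (P Q : Matrix d d ℂ) : Prop :=
  P.IsHermitian ∧ P * P = P ∧ P * Q = Q ∧
    ∀ v : d → ℂ, Q.mulVec v = 0 → P.mulVec v = 0

/-- The coarse-graining (measurement) map
`λ_cg(X) = Tr(F X) |0⟩⟨0| + Tr((I − F) X) |1⟩⟨1|`, where `F = P₊ + E₀` and
`|0⟩, |1⟩` are two fixed orthonormal vectors of `ℂ^d`. -/
noncomputable def lamCG {m d : ℕ} (F : Matrix (Fin m) (Fin m) ℂ) (e0 e1 : Fin d → ℂ)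
    (X : Matrix (Fin m) (Fin m) ℂ) : Matrix (Fin d) (Fin d) ℂ :=
  ((F * X).trace) • Matrix.vecMulVec e0 (star e0) +
    (((1 - F) * X).trace) • Matrix.vecMulVec e1 (star e1)

open Matrix
open scoped MatrixOrder

section TraceNorm

variable {n : Type*} [Fintype n] [DecidableEq n]

theorem traceNorm_eq_re_trace_sqrt (M : Matrix n n ℂ) :
    traceNorm M = (CFC.sqrt (Mᴴ * M)).trace.re := by
  have hM := posSemidef_conjTranspose_mul_self M
  rw [traceNorm, CFC.sqrt_eq_cfc, cfc_nnreal_eq_real _ _ hM.nonneg, hM.1.cfc_eq, IsHermitian.cfc,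
    Unitary.conjStarAlgAut_apply]
  congr 5
  funext i
  simp [max_eq_left (hM.eigenvalues_nonneg i)]

theorem traceNorm_eq_re_trace_of_mul_self_eq {M N : Matrix n n ℂ} (hN : N.PosSemidef)
    (h : N * N = Mᴴ * M) : traceNorm M = N.trace.re := by
  rw [traceNorm_eq_re_trace_sqrt, CFC.sqrt_unique h hN.nonneg]

theorem traceNorm_smul_sub_vecMulVec {u v : n → ℂ} (hu : star u ⬝ᵥ u = 1)
    (hv : star v ⬝ᵥ v = 1) (huv : star u ⬝ᵥ v = 0) (c : ℂ) :
    traceNorm (c • (vecMulVec u (star u) - vecMulVec v (star v))) = 2 * ‖c‖ := by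
  have hvu : star v ⬝ᵥ u = 0 := by rw [star_dotProduct, huv, star_zero]
  set Pu := vecMulVec u (star u)
  set Pv := vecMulVec v (star v)
  have hPu : Pu.PosSemidef := posSemidef_vecMulVec_self_star u
  have hPv : Pv.PosSemidef := posSemidef_vecMulVec_self_star v
  have hPuPu : Pu * Pu = Pu := by simp [Pu, vecMulVec_mul_vecMulVec, hu]
  have hPvPv : Pv * Pv = Pv := by simp [Pv, vecMulVec_mul_vecMulVec, hv]
  have hPuPv : Pu * Pv = 0 := by simp [Pu, Pv, vecMulVec_mul_vecMulVec, huv]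
  have hPvPu : Pv * Pu = 0 := by simp [Pu, Pv, vecMulVec_mul_vecMulVec, hvu]
  have hN : ((‖c‖ : ℂ) • (Pu + Pv)).PosSemidef :=
    (hPu.add hPv).smul (by exact_mod_cast norm_nonneg c)
  rw [traceNorm_eq_re_trace_of_mul_self_eq hN]
  · rw [trace_smul, trace_add, trace_vecMulVec, trace_vecMulVec, dotProduct_comm u, hu,
      dotProduct_comm v, hv, smul_eq_mul, Complex.re_ofReal_mul]
    norm_num
    ring
  · have hc : star c * c = ‖c‖ * ‖c‖ := by rw [← sq, ← Complex.conj_mul']; rfl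
    rw [conjTranspose_smul, conjTranspose_sub, hPu.1, hPv.1, smul_mul_smul, smul_mul_smul, hc]
    simp only [add_mul, mul_add, sub_mul, mul_sub, hPuPu, hPvPv, hPuPv, hPvPu, add_zero, zero_add,
      sub_zero, zero_sub, sub_neg_eq_add]

end TraceNorm

theorem Complex.norm_sub_of_nonneg_of_le {a b : ℂ} (hb : 0 ≤ b) (hba : b ≤ a) :
    ‖a - b‖ = ‖a‖ - ‖b‖ := by
  rw [← Complex.re_eq_norm.mpr hb, ← Complex.re_eq_norm.mpr (hb.trans hba),
    ← Complex.re_eq_norm.mpr (sub_nonneg.mpr hba), Complex.sub_re]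

theorem lamCG_of_trace_eq_zero {m d : ℕ} (F : Matrix (Fin m) (Fin m) ℂ) (e0 e1 : Fin d → ℂ)
    {X : Matrix (Fin m) (Fin m) ℂ} (hX : X.trace = 0) :
    lamCG F e0 e1 X = (F * X).trace • (vecMulVec e0 (star e0) - vecMulVec e1 (star e1)) := by
  rw [lamCG, sub_mul, one_mul, trace_sub, hX, zero_sub, neg_smul, smul_sub, sub_eq_add_neg]

theorem traceNorm_lamCG_of_trace_eq_zero {m d : ℕ} (F : Matrix (Fin m) (Fin m) ℂ)
    {e0 e1 : Fin d → ℂ} (he0 : star e0 ⬝ᵥ e0 = 1) (he1 : star e1 ⬝ᵥ e1 = 1)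
    (he01 : star e0 ⬝ᵥ e1 = 0) {X : Matrix (Fin m) (Fin m) ℂ} (hX : X.trace = 0) :
    traceNorm (lamCG F e0 e1 X) = 2 * ‖(F * X).trace‖ := by
  rw [lamCG_of_trace_eq_zero F e0 e1 hX, traceNorm_smul_sub_vecMulVec he0 he1 he01]

section Jordan

variable {n : Type*} [Fintype n]

theorem IsSupportProjection.mul_eq_zero_of_mul_eq_zero {P Q R : Matrix n n ℂ}
    (hP : IsSupportProjection P Q) (h : Q * R = 0) : P * R = 0 := by
  refine ext_iff_mulVec.mpr fun v => ?_
  rw [← mulVec_mulVec, hP.2.2.2 _ (by rw [mulVec_mulVec, h, zero_mulVec]), zero_mulVec]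

theorem Matrix.PosSemidef.mul_eq_zero_of_sub_posSemidef {𝕜 : Type*} [RCLike 𝕜]
    {E P R : Matrix n n 𝕜} (hE : E.PosSemidef) (hPE : (P - E).PosSemidef) (h : P * R = 0) : E * R = 0 := by
  refine ext_iff_mulVec.mpr fun v => ?_
  set w := R *ᵥ v
  have hPw : P *ᵥ w = 0 := by rw [mulVec_mulVec, h, zero_mulVec]
  have hsum : star w ⬝ᵥ E *ᵥ w + star w ⬝ᵥ (P - E) *ᵥ w = 0 := by
    rw [← dotProduct_add, ← add_mulVec, add_sub_cancel, hPw, dotProduct_zero]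
  have hEw : star w ⬝ᵥ E *ᵥ w = 0 :=
    le_antisymm (eq_neg_of_add_eq_zero_left hsum ▸ neg_nonpos.mpr (hPE.dotProduct_mulVec_nonneg w))
      (hE.dotProduct_mulVec_nonneg w)
  rw [← mulVec_mulVec, (hE.dotProduct_mulVec_zero_iff w).mp hEw, zero_mulVec]

theorem Matrix.IsHermitian.mul_eq_zero_comm {α : Type*} [CommSemiring α] [StarRing α]
    {A B : Matrix n n α} (hA : A.IsHermitian)
    (hB : B.IsHermitian) (h : A * B = 0) : B * A = 0 := by
  simpa [hA.eq, hB.eq] using congrArg Matrix.conjTranspose h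

variable [DecidableEq n] {Δp Δm : Matrix n n ℂ}

theorem add_mul_sub_eq_of_isSupportProjection (hΔp : Δp.PosSemidef) (hΔm : Δm.PosSemidef)
    (horth : Δp * Δm = 0) {Pp Pm E : Matrix n n ℂ} (hPp : IsSupportProjection Pp Δp)
    (hPm : IsSupportProjection Pm Δm) (hE : E.PosSemidef) (hEle : (1 - Pp - Pm - E).PosSemidef) :
    (Pp + E) * (Δp - Δm) = Δp := by
  have hPpΔm : Pp * Δm = 0 := hPp.mul_eq_zero_of_mul_eq_zero horth
  have hPmΔp : Pm * Δp = 0 :=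
    hPm.mul_eq_zero_of_mul_eq_zero (hΔp.1.mul_eq_zero_comm hΔm.1 horth)
  have hEΔp : E * Δp = 0 := hE.mul_eq_zero_of_sub_posSemidef hEle (by
    rw [sub_mul, sub_mul, one_mul, hPp.2.2.1, hPmΔp, sub_zero, sub_self])
  have hEΔm : E * Δm = 0 := hE.mul_eq_zero_of_sub_posSemidef hEle (by
    rw [sub_mul, sub_mul, one_mul, hPpΔm, hPm.2.2.1, sub_zero, sub_self])
  rw [add_mul, mul_sub, mul_sub, hPp.2.2.1, hPpΔm, hEΔp, hEΔm, sub_zero, sub_zero, add_zero]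

theorem traceNorm_sub_of_mul_eq_zero (hΔp : Δp.PosSemidef) (hΔm : Δm.PosSemidef)
    (horth : Δp * Δm = 0) : traceNorm (Δp - Δm) = (Δp + Δm).trace.re := by
  have horth' : Δm * Δp = 0 := hΔp.1.mul_eq_zero_comm hΔm.1 horth
  refine traceNorm_eq_re_trace_of_mul_self_eq (hΔp.add hΔm) ?_
  rw [conjTranspose_sub, hΔp.1.eq, hΔm.1.eq]
  simp only [add_mul, mul_add, sub_mul, mul_sub, horth, horth', add_zero, zero_add, sub_zero,
    zero_sub, sub_neg_eq_add]

end Jordan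

theorem lamCG_saturates_general_bound_general
    {m d : ℕ}
    (A B : Matrix (Fin m) (Fin m) ℂ)
    (hAtr : A.trace = 0) (hBtr : B.trace = 0)
    (Δp Δm : Matrix (Fin m) (Fin m) ℂ)
    (hΔp : Δp.PosSemidef) (hΔm : Δm.PosSemidef)
    (hJordan : A - B = Δp - Δm) (horth : Δp * Δm = 0)
    (Pp Pm : Matrix (Fin m) (Fin m) ℂ)
    (hPp : IsSupportProjection Pp Δp) (hPm : IsSupportProjection Pm Δm)
    (P0 : Matrix (Fin m) (Fin m) ℂ) (hP0 : P0 = 1 - Pp - Pm)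
    (E₀ : Matrix (Fin m) (Fin m) ℂ)
    (hE₀pos : E₀.PosSemidef) (hE₀le : (P0 - E₀).PosSemidef)
    (e0 e1 : Fin d → ℂ)
    (he0 : ∑ x : Fin d, (starRingEnd ℂ) (e0 x) * e0 x = 1)
    (he1 : ∑ x : Fin d, (starRingEnd ℂ) (e1 x) * e1 x = 1)
    (he01 : ∑ x : Fin d, (starRingEnd ℂ) (e0 x) * e1 x = 0)
    (hTrB : 0 ≤ (((Pp + E₀) * B).trace))
    (hTrAB : (((Pp + E₀) * B).trace) ≤ (((Pp + E₀) * A).trace)) :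
    traceNorm (lamCG (Pp + E₀) e0 e1 A) - traceNorm (lamCG (Pp + E₀) e0 e1 B)
        = traceNorm (lamCG (Pp + E₀) e0 e1 (A - B)) ∧
    traceNorm (lamCG (Pp + E₀) e0 e1 (A - B)) = traceNorm (A - B) := by
  subst hP0
  have hΔtr : (A - B).trace = 0 := by rw [trace_sub, hAtr, hBtr, sub_zero]
  have hΔmtr : Δm.trace = Δp.trace := by
    rw [hJordan, trace_sub, sub_eq_zero] at hΔtr
    exact hΔtr.symm
  have hFΔ : (Pp + E₀) * (A - B) = Δp := by
    rw [hJordan, add_mul_sub_eq_of_isSupportProjection hΔp hΔm horth hPp hPm hE₀pos hE₀le]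
  simp only [traceNorm_lamCG_of_trace_eq_zero _ he0 he1 he01, hAtr, hBtr, hΔtr]
  refine ⟨?_, ?_⟩
  · rw [mul_sub, trace_sub, Complex.norm_sub_of_nonneg_of_le hTrB hTrAB]
    ring
  · rw [hFΔ, hJordan, traceNorm_sub_of_mul_eq_zero hΔp hΔm horth, trace_add, hΔmtr,
      ← Complex.re_eq_norm.mpr hΔp.trace_nonneg, Complex.add_re]
    ring

/-- let `A, B` be traceless Hermitian matrices, `Δ = A − B` with Jordan
decomposition `Δ = Δ₊ − Δ₋`, `P₊` the projector onto the strictly positive eigenspace of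
`Δ`, `P₀` the projector onto its kernel, and `E₀` Hermitian with `0 ≤ E₀ ≤ P₀`. If
`Tr((P₊+E₀)A) ≥ Tr((P₊+E₀)B) ≥ 0`, then the map
`λ_cg(X) = Tr((P₊+E₀)X)|0⟩⟨0| + Tr((I−P₊−E₀)X)|1⟩⟨1|` satisfies
`‖λ_cg(A)‖₁ − ‖λ_cg(B)‖₁ = ‖λ_cg(A − B)‖₁ = ‖A − B‖₁`. -/
theorem lamCG_saturates_general_bound
    {m d : ℕ} (hd : 2 ≤ d)
    (A B : Matrix (Fin m) (Fin m) ℂ)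
    (hA : A.IsHermitian) (hB : B.IsHermitian)
    (hAtr : A.trace = 0) (hBtr : B.trace = 0)
    (Δp Δm : Matrix (Fin m) (Fin m) ℂ)
    (hΔp : Δp.PosSemidef) (hΔm : Δm.PosSemidef)
    (hJordan : A - B = Δp - Δm) (horth : Δp * Δm = 0)
    (Pp Pm : Matrix (Fin m) (Fin m) ℂ)
    (hPp : IsSupportProjection Pp Δp) (hPm : IsSupportProjection Pm Δm)
    (P0 : Matrix (Fin m) (Fin m) ℂ) (hP0 : P0 = 1 - Pp - Pm)
    (E₀ : Matrix (Fin m) (Fin m) ℂ) (hE₀herm : E₀.IsHermitian)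
    (hE₀pos : E₀.PosSemidef) (hE₀le : (P0 - E₀).PosSemidef)
    (e0 e1 : Fin d → ℂ)
    (he0 : ∑ x : Fin d, (starRingEnd ℂ) (e0 x) * e0 x = 1)
    (he1 : ∑ x : Fin d, (starRingEnd ℂ) (e1 x) * e1 x = 1)
    (he01 : ∑ x : Fin d, (starRingEnd ℂ) (e0 x) * e1 x = 0)
    (hTrB : 0 ≤ (((Pp + E₀) * B).trace))
    (hTrAB : (((Pp + E₀) * B).trace) ≤ (((Pp + E₀) * A).trace)) :
    traceNorm (lamCG (Pp + E₀) e0 e1 A) - traceNorm (lamCG (Pp + E₀) e0 e1 B)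
        = traceNorm (lamCG (Pp + E₀) e0 e1 (A - B)) ∧
    traceNorm (lamCG (Pp + E₀) e0 e1 (A - B)) = traceNorm (A - B) :=
  lamCG_saturates_general_bound_general A B hAtr hBtr Δp Δm hΔp hΔm hJordan horth Pp Pm hPp hPm P0
    hP0 E₀ hE₀pos hE₀le e0 e1 he0 he1 he01 hTrB hTrAB
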